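/- arXiv:math/9809033 — 3 statements merged into one kernel-verified Lean document; each statement's English description precedes it below -/
import Mathlib

section
/- Let $G$ be a simply connected complex Lie group that embeds as a closed subgroup of $\mathrm{Aut}(\mathbb{C})^n$ (a product of $n$ copies of the affine group of $\mathbb{C}$). If $G$ is nilpotent and connected, then $G$ is commutative. -/
open Matrix Manifold

open scoped commutatorElement

/-!
On each factor an element `g` acts as `z ↦ A g * z + B g`, with `A` a character and `B` a crossed
homomorphism for it. Commutators are translations, and commuting a translation with `a` scales its
translation part by `1 - A a`. In a nilpotent group the iterated commutators
`⁅⋯⁅⁅b, a⁆, a⁆⋯, a⁆` eventually vanish, so `(1 - A a) ^ n * B ⁅b, a⁆ = 0`: either `⁅b, a⁆` is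
trivial or `a` is a translation. Swapping `a` and `b`, the remaining case is that of two
translations, which commute.
-/

theorem Group.IsNilpotent.exists_iterate_commutatorElement_eq_one {G : Type*} [Group G]
    (hG : Group.IsNilpotent G) (x a : G) : ∃ n, (⁅·, a⁆)^[n] x = 1 := by
  obtain ⟨n, hn⟩ := Subgroup.nilpotent_iff_lowerCentralSeries.mp hG
  have mem : ∀ k, (⁅·, a⁆)^[k] x ∈ (⊤ : Subgroup G).lowerCentralSeries k := by
    intro k
    induction k with
    | zero => exact Subgroup.mem_top x
    | succ k ih =>
      rw [Function.iterate_succ_apply']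
      exact Subgroup.commutator_mem_commutator ih (Subgroup.mem_top a)
  exact ⟨n, by simpa [hn] using mem n⟩

theorem MonoidHom.map_commutatorElement_eq_one {G M : Type*} [Group G] [CommMonoid M]
    (f : G →* M) (a b : G) : f ⁅a, b⁆ = 1 := by
  rw [← f.coe_toHomUnits, map_commutatorElement, commutatorElement_eq_one_iff_mul_comm.mpr
    (mul_comm _ _), Units.val_one]

def IsCrossedHom {G K : Type*} [Group G] [CommRing K] (A : G →* K) (B : G → K) : Prop :=
  ∀ g h, B (g * h) = A g * B h + B g

namespace IsCrossedHom

variable {G K : Type*} [Group G] [CommRing K] {A : G →* K} {B : G → K}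

theorem map_one (hB : IsCrossedHom A B) : B 1 = 0 := by
  simpa using hB 1 1

theorem mul_map_inv_add (hB : IsCrossedHom A B) (g : G) : A g * B g⁻¹ + B g = 0 := by
  rw [← hB, mul_inv_cancel, hB.map_one]

theorem map_inv_of_eq_one (hB : IsCrossedHom A B) {x : G} (hx : A x = 1) : B x⁻¹ = -B x := by
  linear_combination (by simpa [hx] using hB.mul_map_inv_add x : B x⁻¹ + B x = 0)

theorem map_commutatorElement_of_eq_one (hB : IsCrossedHom A B) {x : G} (hx : A x = 1) (g : G) :
    B ⁅x, g⁆ = (1 - A g) * B x := by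
  have hx' : A x⁻¹ = 1 := by simpa [hx] using map_mul_eq_one A (mul_inv_cancel x)
  rw [commutatorElement_def, mul_assoc, mul_assoc, hB, hB, hB, hx, hx', hB.map_inv_of_eq_one hx]
  linear_combination hB.mul_map_inv_add g

theorem map_iterate_commutatorElement (hB : IsCrossedHom A B) {x : G} (hx : A x = 1) (a : G)
    (k : ℕ) : B ((⁅·, a⁆)^[k] x) = (1 - A a) ^ k * B x := by
  induction k with
  | zero => simp
  | succ k ih =>
    have hA : A ((⁅·, a⁆)^[k] x) = 1 := by
      cases k with
      | zero => exact hx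
      | succ k => rw [Function.iterate_succ_apply']; exact A.map_commutatorElement_eq_one _ _
    rw [Function.iterate_succ_apply', hB.map_commutatorElement_of_eq_one hA, ih, pow_succ',
      mul_assoc]

theorem eq_one_or_map_commutatorElement_eq_zero [NoZeroDivisors K] (hB : IsCrossedHom A B)
    (hG : Group.IsNilpotent G) (a b : G) : A a = 1 ∨ B ⁅b, a⁆ = 0 := by
  obtain ⟨n, hn⟩ := hG.exists_iterate_commutatorElement_eq_one ⁅b, a⁆ a
  have h := hB.map_iterate_commutatorElement (A.map_commutatorElement_eq_one b a) a n
  rw [hn, hB.map_one, eq_comm, mul_eq_zero] at h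
  exact h.imp_left fun h => (sub_eq_zero.mp (eq_zero_of_pow_eq_zero h)).symm

theorem map_commutatorElement_eq_zero [NoZeroDivisors K] (hB : IsCrossedHom A B)
    (hG : Group.IsNilpotent G) (a b : G) : B ⁅a, b⁆ = 0 := by
  rcases hB.eq_one_or_map_commutatorElement_eq_zero hG a b with ha | hba
  · rcases hB.eq_one_or_map_commutatorElement_eq_zero hG b a with hb | hab
    · rw [hB.map_commutatorElement_of_eq_one ha, hb, sub_self, zero_mul]
    · exact hab
  · rw [← commutatorElement_inv, hB.map_inv_of_eq_one (A.map_commutatorElement_eq_one b a), hba,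
      neg_zero]

end IsCrossedHom

theorem MonoidHom.map_commutatorElement_eq_one_of_affine {G K : Type*} [Group G] [CommRing K]
    [NoZeroDivisors K] (hG : Group.IsNilpotent G) (ρ : G →* GL (Fin 2) K)
    (hρ : ∀ g, (ρ g : Matrix (Fin 2) (Fin 2) K) 1 0 = 0 ∧
      (ρ g : Matrix (Fin 2) (Fin 2) K) 1 1 = 1)
    (a b : G) : ρ ⁅a, b⁆ = 1 := by
  let A : G →* K :=
    { toFun := fun g => (ρ g : Matrix (Fin 2) (Fin 2) K) 0 0
      map_one' := by simp
      map_mul' := fun g h => by simp [Matrix.mul_apply, (hρ h).1] }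
  have hB : IsCrossedHom A (fun g => (ρ g : Matrix (Fin 2) (Fin 2) K) 0 1) := fun g h => by
    simp [A, Matrix.mul_apply, (hρ h).2]
  ext i j
  fin_cases i <;> fin_cases j
  exacts [A.map_commutatorElement_eq_one a b, hB.map_commutatorElement_eq_zero hG a b,
    (hρ ⁅a, b⁆).1, (hρ ⁅a, b⁆).2]

theorem nilpotent_simply_connected_subgroup_of_affine_power_comm_general
    (G : Type*) [Group G] [TopologicalSpace G]
    (hnil : Group.IsNilpotent G)
    (n : ℕ) (φ : G →* (Fin n → GL (Fin 2) ℂ))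
    (hemb : Topology.IsClosedEmbedding ⇑φ)
    (haff : ∀ (g : G) (i : Fin n), (φ g i : Matrix (Fin 2) (Fin 2) ℂ) 1 0 = 0 ∧
      (φ g i : Matrix (Fin 2) (Fin 2) ℂ) 1 1 = 1) :
    ∀ a b : G, a * b = b * a := by
  intro a b
  rw [← commutatorElement_eq_one_iff_mul_comm]
  refine hemb.injective ?_
  rw [map_one]
  funext i
  exact ((Pi.evalMonoidHom _ i).comp φ).map_commutatorElement_eq_one_of_affine hnil
    (fun g => haff g i) a b

/-- Let `G` be a simply connected complex Lie group embedding as a closed subgroup of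
`Aut(ℂ)ⁿ` (each factor realized as affine matrices `[[a, b], [0, 1]]` inside `GL(2, ℂ)`).
If `G` is nilpotent and connected, then `G` is commutative. -/
theorem nilpotent_simply_connected_subgroup_of_affine_power_comm
    {E : Type*} [NormedAddCommGroup E] [NormedSpace ℂ E]
    (G : Type*) [Group G] [TopologicalSpace G] [ChartedSpace E G]
    [LieGroup 𝓘(ℂ, E) (⊤ : ℕ∞) G] [SimplyConnectedSpace G] [ConnectedSpace G]
    (hnil : Group.IsNilpotent G)
    (n : ℕ) (φ : G →* (Fin n → GL (Fin 2) ℂ))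
    (hemb : Topology.IsClosedEmbedding ⇑φ)
    (haff : ∀ (g : G) (i : Fin n), (φ g i : Matrix (Fin 2) (Fin 2) ℂ) 1 0 = 0 ∧
      (φ g i : Matrix (Fin 2) (Fin 2) ℂ) 1 1 = 1) :
    ∀ a b : G, a * b = b * a :=
  nilpotent_simply_connected_subgroup_of_affine_power_comm_general G hnil n φ hemb haff
end

section
/- There is no entire holomorphic function $f : \mathbb{C} \to \mathbb{C}$ satisfying $\alpha f(\alpha y) + c \lambda m y^{m-1} = \alpha^m f(y)$ for all $y \in \mathbb{C}$, where $m \geq 2$ is an integer and $\alpha, c, \lambda$ are nonzero complex numbers with $|\alpha| < 1$. -/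
lemma iteratedDeriv_rescale_sub_pow_mul_eq_zero {𝕜 : Type*} [NontriviallyNormedField 𝕜]
    {n : ℕ} {f : 𝕜 → 𝕜} (hf : ContDiff 𝕜 n f) (a : 𝕜) :
    iteratedDeriv n (fun y => a * f (a * y) - a ^ (n + 1) * f y) 0 = 0 := by
  have hrescale : ContDiff 𝕜 n fun y => f (a * y) := hf.comp (contDiff_const.mul contDiff_id)
  rw [iteratedDeriv_fun_sub (contDiff_const.mul hrescale).contDiffAt
      (contDiff_const.mul hf).contDiffAt, iteratedDeriv_const_mul_field,
    iteratedDeriv_const_mul_field, iteratedDeriv_comp_const_mul hf]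
  simp only [mul_zero]
  ring

theorem no_entire_solution_general (m : ℕ) (hm : 2 ≤ m) (α c l : ℂ)
    (hc : c ≠ 0) (hl : l ≠ 0) :
    ¬ ∃ f : ℂ → ℂ, Differentiable ℂ f ∧
      ∀ y : ℂ, α * f (α * y) + c * l * (m : ℂ) * y ^ (m - 1) = α ^ m * f y := by
  rintro ⟨f, hf, hfe⟩
  set n := m - 1
  have hαm : α ^ m = α ^ (n + 1) := by congr 1; omega
  -- At `0` the `n`-th derivative of the right side vanishes, while that of `y ^ n` is `n !`.
  have hpoly : (fun y => c * l * m * y ^ n) = fun y => -(α * f (α * y) - α ^ (n + 1) * f y) :=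
    funext fun y => by rw [← hαm, ← hfe y]; ring
  have hderiv := congrArg (iteratedDeriv n · 0) hpoly
  simp only [iteratedDeriv_const_mul_field, iteratedDeriv_fun_pow_zero,
    iteratedDeriv_fun_neg, iteratedDeriv_rescale_sub_pow_mul_eq_zero hf.contDiff, neg_zero] at hderiv
  have hm0 : (m : ℂ) ≠ 0 := Nat.cast_ne_zero.mpr (by omega)
  exact mul_ne_zero (mul_ne_zero (mul_ne_zero hc hl) hm0) (Nat.cast_ne_zero.mpr n.factorial_ne_zero)
    hderiv

/-- There is no entire function `f : ℂ → ℂ` with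
`α f(α y) + c λ m y^(m-1) = α^m f(y)` for all `y`, where `m ≥ 2` and
`α, c, λ` are nonzero with `|α| < 1`. -/
theorem no_entire_solution (m : ℕ) (hm : 2 ≤ m) (α c l : ℂ)
    (hα : α ≠ 0) (hc : c ≠ 0) (hl : l ≠ 0) (hαlt : ‖α‖ < 1) :
    ¬ ∃ f : ℂ → ℂ, Differentiable ℂ f ∧
      ∀ y : ℂ, α * f (α * y) + c * l * (m : ℂ) * y ^ (m - 1) = α ^ m * f y :=
  no_entire_solution_general m hm α c l hc hl
end

section
/- Let $T(x,y) = (\alpha x, \beta y)$ on $\mathbb{C}^2$ with $0 < |\alpha| \le |\beta| < 1$, and let $\Gamma \subseteq (\mathbb{C}^*)^2$ be a subgroup containing $(\alpha, \beta)$ with finite index, acting freely on $\mathbb{C}^2 \setminus \{0\}$. Then $\Gamma \cong \mathbb{Z} \oplus \mathbb{Z}/m\mathbb{Z}$ for some $m \ge 1$: $\Gamma$ is generated by an element of infinite order together with a torsion element $(\lambda, \mu)$ where $\lambda$ and $\mu$ are primitive $m$-th roots of unity. -/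
/-!
The torsion subgroup `T` of `Γ` meets `⟨(α, β)⟩` trivially, since `‖β‖ < 1`, so it injects into
the finite quotient `Γ ⧸ ⟨(α, β)⟩`; by freeness either projection embeds it into `ℂˣ`, so `T` is
finite cyclic and the coordinates of a generator are primitive roots of its order. The quotient
`Γ ⧸ T` is torsion-free, and `x ↦ xⁿ` (`n` the index) embeds it into the cyclic image of
`⟨(α, β)⟩`; so `Γ ⧸ T` is infinite cyclic and any lift `g` of a generator splits `Γ ≅ ⟨g⟩ × T`.
-/

open Subgroup Function

theorem Subgroup.zpowers_subgroupOf {G : Type*} [Group G] {H : Subgroup G} {a : G} (ha : a ∈ H) :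
    (zpowers a).subgroupOf H = zpowers ⟨a, ha⟩ := by
  apply map_injective H.subtype_injective
  rw [subgroupOf_map_subtype, MonoidHom.map_zpowers]
  exact inf_eq_left.mpr (zpowers_le.mpr ha)

theorem eq_one_of_mem_zpowers_of_isOfFinOrder {G : Type*} [Group G] {a x : G}
    (ha : ¬IsOfFinOrder a) (hx : x ∈ zpowers a) (hfin : IsOfFinOrder x) : x = 1 := by
  obtain ⟨k, rfl⟩ := mem_zpowers_iff.mp hx
  obtain ⟨n, hn, hpow⟩ := isOfFinOrder_iff_zpow_eq_one.mp hfin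
  by_contra hk
  rw [← zpow_mul] at hpow
  have hkn : k * n ≠ 0 := mul_ne_zero (fun h => hk (by simp [h])) hn
  exact ha (isOfFinOrder_iff_zpow_eq_one.mpr ⟨k * n, hkn, hpow⟩)

namespace CommGroup

variable {G : Type*} [CommGroup G] {a : G}

theorem finite_torsion_of_index_zpowers_ne_zero (ha : ¬IsOfFinOrder a)
    (hindex : (zpowers a).index ≠ 0) : Finite (torsion G) := by
  have : (zpowers a).FiniteIndex := ⟨hindex⟩
  refine Finite.of_injective ((QuotientGroup.mk' (zpowers a)).comp (torsion G).subtype) ?_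
  rw [injective_iff_map_eq_one]
  intro x hx
  exact Subtype.ext <| eq_one_of_mem_zpowers_of_isOfFinOrder ha
    ((QuotientGroup.eq_one_iff _).mp hx) x.2

/-- `x ↦ x ^ (zpowers a).index` embeds the torsion-free quotient into the cyclic group generated
by the image of `a`. -/
theorem isCyclic_quotient_torsion_of_index_zpowers_ne_zero (hindex : (zpowers a).index ≠ 0) :
    IsCyclic (G ⧸ torsion G) := by
  have hpow_mem : ∀ x : G ⧸ torsion G, x ^ (zpowers a).index ∈ zpowers (a : G ⧸ torsion G) := by
    intro x
    obtain ⟨x, rfl⟩ := QuotientGroup.mk_surjective x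
    have := mem_map_of_mem (QuotientGroup.mk' (torsion G)) (pow_index_mem (zpowers a) x)
    rwa [MonoidHom.map_zpowers] at this
  exact isCyclic_of_injective ((powMonoidHom _).codRestrict _ hpow_mem)
    fun x y hxy => IsMulTorsionFree.pow_left_injective hindex (congrArg Subtype.val hxy)

theorem exists_bijective_zpowersHom_coprod_torsion (ha : ¬IsOfFinOrder a)
    (hindex : (zpowers a).index ≠ 0) :
    ∃ g : G, ¬IsOfFinOrder g ∧ Bijective ((zpowersHom G g).coprod (torsion G).subtype) := by
  have := isCyclic_quotient_torsion_of_index_zpowers_ne_zero hindex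
  obtain ⟨g', hg⟩ := IsCyclic.exists_generator (α := G ⧸ torsion G)
  obtain ⟨g, rfl⟩ := QuotientGroup.mk_surjective g'
  have hdecomp : ∀ x : G, ∃ k : ℤ, (g ^ k)⁻¹ * x ∈ torsion G := fun x => by
    obtain ⟨k, hk⟩ := mem_zpowers_iff.mp (hg x)
    exact ⟨k, QuotientGroup.eq.mp hk⟩
  have hg_inf : ¬IsOfFinOrder g := fun hfin => by
    obtain ⟨k, hk⟩ := hdecomp a
    exact ha (by simpa using (hfin.zpow (i := k)).mul hk)
  refine ⟨g, hg_inf, ?_, fun x => ?_⟩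
  · rw [injective_iff_map_eq_one]
    rintro ⟨k, t⟩ hkt
    replace hkt : g ^ k.toAdd = (t : G)⁻¹ := eq_inv_of_mul_eq_one_left hkt
    have hk : g ^ k.toAdd = 1 := eq_one_of_mem_zpowers_of_isOfFinOrder hg_inf
      (zpow_mem_zpowers g _) (hkt ▸ t.2.inv)
    have hk0 : k.toAdd = 0 :=
      injective_zpow_iff_not_isOfFinOrder.mpr hg_inf (hk.trans (zpow_zero g).symm)
    have ht1 : t = 1 := Subtype.ext (inv_eq_one.mp (hkt ▸ hk))
    exact Prod.ext hk0 ht1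
  · obtain ⟨k, hk⟩ := hdecomp x
    exact ⟨(Multiplicative.ofAdd k, ⟨_, hk⟩), by simp⟩

theorem nonempty_mulEquiv_int_prod_zmod_card_torsion {g : G}
    (hg : Bijective ((zpowersHom G g).coprod (torsion G).subtype)) [IsCyclic (torsion G)] :
    Nonempty (G ≃* Multiplicative (ℤ × ZMod (Nat.card (torsion G)))) :=
  ⟨(MulEquiv.ofBijective _ hg).symm.trans <|
    ((MulEquiv.refl _).prodCongr (zmodCyclicMulEquiv inferInstance).symm).trans
      (MulEquiv.prodMultiplicative _ _).symm⟩

theorem closure_pair_eq_top {g : G} {t : torsion G}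
    (hg : Surjective ((zpowersHom G g).coprod (torsion G).subtype))
    (ht : ∀ x : torsion G, x ∈ zpowers t) : closure {g, (t : G)} = ⊤ := by
  refine eq_top_iff.mpr fun x _ => ?_
  obtain ⟨⟨k, y⟩, rfl⟩ := hg x
  obtain ⟨j, rfl⟩ := mem_zpowers_iff.mp (ht y)
  exact mul_mem (zpow_mem (subset_closure (by simp)) _) (zpow_mem (subset_closure (by simp)) _)

end CommGroup

def ActsFreelyOnPuncturedPlane (Γ : Subgroup (ℂˣ × ℂˣ)) : Prop :=
  ∀ g ∈ Γ, g ≠ 1 → ∀ x y : ℂ, (x, y) ≠ (0, 0) → ((g.1 : ℂ) * x, (g.2 : ℂ) * y) ≠ (x, y)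

namespace ActsFreelyOnPuncturedPlane

variable {Γ : Subgroup (ℂˣ × ℂˣ)}

theorem injective_fst (hΓ : ActsFreelyOnPuncturedPlane Γ) :
    Injective ((Units.coeHom ℂ).comp ((MonoidHom.fst ℂˣ ℂˣ).comp Γ.subtype)) := by
  rw [injective_iff_map_eq_one]
  intro g hg
  by_contra hne
  exact hΓ g g.2 (by simpa using hne) 1 0 (by simp) (by simp_all)

theorem injective_snd (hΓ : ActsFreelyOnPuncturedPlane Γ) :
    Injective ((Units.coeHom ℂ).comp ((MonoidHom.snd ℂˣ ℂˣ).comp Γ.subtype)) := by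
  rw [injective_iff_map_eq_one]
  intro g hg
  by_contra hne
  exact hΓ g g.2 (by simpa using hne) 0 1 (by simp) (by simp_all)

theorem isCyclic_torsion (hΓ : ActsFreelyOnPuncturedPlane Γ) [Finite (CommGroup.torsion Γ)] :
    IsCyclic (CommGroup.torsion Γ) :=
  isCyclic_of_injective_ringHom
    (((Units.coeHom ℂ).comp ((MonoidHom.fst ℂˣ ℂˣ).comp Γ.subtype)).comp
      (CommGroup.torsion Γ).subtype)
    (hΓ.injective_fst.comp Subtype.val_injective)

end ActsFreelyOnPuncturedPlane

theorem IsPrimitiveRoot.orderOf_of_injective {G M : Type*} [Monoid G] [CommMonoid M] {f : G →* M}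
    (hf : Injective f) (x : G) : IsPrimitiveRoot (f x) (orderOf x) :=
  orderOf_injective f hf x ▸ IsPrimitiveRoot.orderOf (f x)

theorem not_isOfFinOrder_of_norm_snd_lt_one {g : ℂˣ × ℂˣ} (h : ‖(g.2 : ℂ)‖ < 1) :
    ¬IsOfFinOrder g := fun hfin =>
  h.ne (((Units.coeHom ℂ).comp (MonoidHom.snd ℂˣ ℂˣ)).isOfFinOrder hfin).norm_eq_one

theorem hopf_surface_fundamental_group_general (α β : ℂˣ)
    (h1 : ‖(β : ℂ)‖ < 1)
    (Γ : Subgroup (ℂˣ × ℂˣ)) (hT : (α, β) ∈ Γ)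
    (hindex : (Subgroup.zpowers ((α, β) : ℂˣ × ℂˣ)).relIndex Γ ≠ 0)
    (hfree : ∀ g ∈ Γ, g ≠ 1 → ∀ x y : ℂ, (x, y) ≠ (0, 0) →
      ((g.1 : ℂ) * x, (g.2 : ℂ) * y) ≠ (x, y)) :
    ∃ m : ℕ, 1 ≤ m ∧ Nonempty (Γ ≃* Multiplicative (ℤ × ZMod m)) ∧
      ∃ g t : ℂˣ × ℂˣ, g ∈ Γ ∧ t ∈ Γ ∧
        (∀ k : ℤ, k ≠ 0 → g ^ k ≠ 1) ∧ orderOf t = m ∧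
        IsPrimitiveRoot ((t.1 : ℂ)) m ∧ IsPrimitiveRoot ((t.2 : ℂ)) m ∧
        Subgroup.closure {g, t} = Γ := by
  replace hfree : ActsFreelyOnPuncturedPlane Γ := hfree
  have ha : ¬IsOfFinOrder (⟨(α, β), hT⟩ : Γ) := fun hfin =>
    not_isOfFinOrder_of_norm_snd_lt_one h1 (Γ.subtype.isOfFinOrder hfin)
  rw [relIndex, zpowers_subgroupOf hT] at hindex
  have := CommGroup.finite_torsion_of_index_zpowers_ne_zero ha hindex
  have := hfree.isCyclic_torsion
  obtain ⟨g, hg_inf, hg⟩ := CommGroup.exists_bijective_zpowersHom_coprod_torsion ha hindex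
  obtain ⟨t, ht⟩ := IsCyclic.exists_generator (α := CommGroup.torsion Γ)
  have hm : orderOf t = Nat.card (CommGroup.torsion Γ) := orderOf_eq_card_of_forall_mem_zpowers ht
  refine ⟨_, Nat.card_pos, CommGroup.nonempty_mulEquiv_int_prod_zmod_card_torsion hg,
    g, t, g.2, (t : Γ).2, fun k hk hgk => hg_inf ?_, by simp [hm], ?_, ?_, ?_⟩
  · exact isOfFinOrder_iff_zpow_eq_one.mpr ⟨k, hk, Subtype.ext (by simpa using hgk)⟩
  · simpa [orderOf_coe, hm] using IsPrimitiveRoot.orderOf_of_injective hfree.injective_fst (t : Γ)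
  · simpa [orderOf_coe, hm] using IsPrimitiveRoot.orderOf_of_injective hfree.injective_snd (t : Γ)
  · have := congrArg (map Γ.subtype) (CommGroup.closure_pair_eq_top hg.2 ht)
    rwa [MonoidHom.map_closure, Set.image_pair, ← MonoidHom.range_eq_map, range_subtype] at this

/-- Let `T = (α, β) ∈ (ℂ*)²` with `0 < |α| ≤ |β| < 1` and let `Γ ≤ (ℂ*)²` be a subgroup
containing `T` such that the cyclic group generated by `T` has finite index in `Γ`, and
such that `Γ` acts freely on `ℂ² \ {0}` by coordinatewise multiplication. Then
`Γ ≅ ℤ ⊕ ℤ/mℤ` for some `m ≥ 1`: it is generated by an element of infinite order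
together with a torsion element of order `m` both of whose coordinates are primitive
`m`-th roots of unity. -/
theorem hopf_surface_fundamental_group (α β : ℂˣ)
    (h0 : 0 < ‖(α : ℂ)‖)
    (hle : ‖(α : ℂ)‖ ≤ ‖(β : ℂ)‖)
    (h1 : ‖(β : ℂ)‖ < 1)
    (Γ : Subgroup (ℂˣ × ℂˣ)) (hT : (α, β) ∈ Γ)
    (hindex : (Subgroup.zpowers ((α, β) : ℂˣ × ℂˣ)).relIndex Γ ≠ 0)
    (hfree : ∀ g ∈ Γ, g ≠ 1 → ∀ x y : ℂ, (x, y) ≠ (0, 0) →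
      ((g.1 : ℂ) * x, (g.2 : ℂ) * y) ≠ (x, y)) :
    ∃ m : ℕ, 1 ≤ m ∧ Nonempty (Γ ≃* Multiplicative (ℤ × ZMod m)) ∧
      ∃ g t : ℂˣ × ℂˣ, g ∈ Γ ∧ t ∈ Γ ∧
        (∀ k : ℤ, k ≠ 0 → g ^ k ≠ 1) ∧ orderOf t = m ∧
        IsPrimitiveRoot ((t.1 : ℂ)) m ∧ IsPrimitiveRoot ((t.2 : ℂ)) m ∧
        Subgroup.closure {g, t} = Γ :=
  hopf_surface_fundamental_group_general α β h1 Γ hT hindex hfree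
end
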